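/- Let λ : ℝ → [0, ∞) be integrable and even with cumulative function Λ and Λ(∞) = ∫_ℝ λ. Let θ₁ < θ₂ < … < θ_K < θ_max with θ_{i+1} − θ_i ≥ ζ for all i and θ_max − θ_K ≥ ε, let c₁, …, c_K > 0 satisfy c_i/c_j ≤ r for all i, j, and let v(ω) = ∑_{i=1}^K c_i λ(ω − θ_i). Let θ̂₁ < θ̂₂ < … < θ̂_K satisfy |θ̂_i − θ_i| ≤ e for all i and the last-cluster balance condition ∫_{(θ̂_{K−1}+θ̂_K)/2}^{θ̂_K} v(ω) dω = ∫_{θ̂_K}^{θ_max} v(ω) dω. If σ > 0 satisfies Λ(ε) ≥ Λ(∞)·(1 − (Λ(σ)/Λ(0) − 1)/(2Kr)) and Λ(ζ/2 − e) ≥ Λ(∞)·(1 − (Λ(σ)/Λ(0) − 1)/(2(K−1)r + 1)), then Λ(θ̂_K − θ_K) ≥ Λ(−σ). -/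

import Mathlib

open MeasureTheory Finset

noncomputable def cumul (lam : ℝ → ℝ) (x : ℝ) : ℝ := ∫ ω in Set.Iic x, lam ω

section Aux
variable {lam : ℝ → ℝ}

lemma cumul_mono (hint : Integrable lam) (hnn : ∀ ω, 0 ≤ lam ω) {x y : ℝ} (h : x ≤ y) :
    cumul lam x ≤ cumul lam y :=
  setIntegral_mono_set hint.integrableOn (ae_of_all _ hnn)
    (HasSubset.Subset.eventuallyLE (Set.Iic_subset_Iic.2 h))

lemma cumul_nonneg (hnn : ∀ ω, 0 ≤ lam ω) (x : ℝ) : 0 ≤ cumul lam x :=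
  setIntegral_nonneg measurableSet_Iic fun ω _ => hnn ω

lemma cumul_le_total (hint : Integrable lam) (hnn : ∀ ω, 0 ≤ lam ω) (x : ℝ) :
    cumul lam x ≤ ∫ ω, lam ω :=
  setIntegral_le_integral hint (ae_of_all _ hnn)

lemma cumul_add_neg (hint : Integrable lam) (heven : ∀ ω, lam (-ω) = lam ω) (x : ℝ) :
    cumul lam x + cumul lam (-x) = ∫ ω, lam ω := by
  have h1 : cumul lam (-x) = ∫ ω in Set.Ioi x, lam ω := by
    unfold cumul
    rw [show (∫ ω in Set.Iic (-x), lam ω) = ∫ ω in Set.Iic (-x), lam (-ω) by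
      simp_rw [heven]]
    rw [integral_comp_neg_Iic (-x) lam, neg_neg]
  rw [h1]
  exact intervalIntegral.integral_Iic_add_Ioi hint.integrableOn hint.integrableOn

lemma cumul_interval (hint : Integrable lam) (a b : ℝ) :
    (∫ ω in a..b, lam ω) = cumul lam b - cumul lam a :=
  (intervalIntegral.integral_Iic_sub_Iic hint.integrableOn hint.integrableOn).symm

lemma cumul_sum_interval (hint : Integrable lam) (θ c : ℕ → ℝ) (s : Finset ℕ) (a b : ℝ) :
    (∫ ω in a..b, ∑ i ∈ s, c i * lam (ω - θ i)) =
      ∑ i ∈ s, c i * (cumul lam (b - θ i) - cumul lam (a - θ i)) := by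
  rw [intervalIntegral.integral_finset_sum]
  · refine Finset.sum_congr rfl fun i _ => ?_
    rw [intervalIntegral.integral_const_mul, intervalIntegral.integral_comp_sub_right,
      cumul_interval hint]
  · intro i _
    exact ((hint.comp_sub_right (θ i)).const_mul (c i)).intervalIntegrable

end Aux

set_option maxHeartbeats 1000000 in
/-- Last-cluster bound: under the separation, off-bound distance,
dynamic range, and accuracy hypotheses, if the last-cluster `K`-median balance condition
`∫_{(θh (K-1) + θh K)/2}^{θh K} v = ∫_{θh K}^{θmax} v` holds for the proxy
`v(ω) = ∑ i, c i * λ(ω - θ i)`, and `σ > 0` satisfies the stated conditions on `Λ(ε)` and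
`Λ(ζ/2 - e)`, then `Λ(θh K - θ K) ≥ Λ(-σ)`. -/
theorem last_cluster_bound (lam : ℝ → ℝ)
    (hnn : ∀ ω, 0 ≤ lam ω) (hint : Integrable lam) (heven : ∀ ω, lam (-ω) = lam ω)
    (K : ℕ) (hK : 2 ≤ K) (θmax : ℝ) (θ θh c : ℕ → ℝ) (ζ ε r e σ : ℝ)
    (hθmax : θ K < θmax)
    (hmono : ∀ i, 1 ≤ i → i < K → θ i < θ (i + 1))
    (hsep : ∀ i, 1 ≤ i → i < K → ζ ≤ θ (i + 1) - θ i)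
    (hoff : ε ≤ θmax - θ K)
    (hc : ∀ i, 1 ≤ i → i ≤ K → 0 < c i)
    (hr : ∀ i j, 1 ≤ i → i ≤ K → 1 ≤ j → j ≤ K → c i / c j ≤ r)
    (hhmono : ∀ i, 1 ≤ i → i < K → θh i < θh (i + 1))
    (he : ∀ i, 1 ≤ i → i ≤ K → |θh i - θ i| ≤ e)
    (hbal : (∫ ω in ((θh (K - 1) + θh K) / 2)..(θh K),
        ∑ i ∈ Finset.Icc 1 K, c i * lam (ω - θ i)) =
      ∫ ω in (θh K)..θmax, ∑ i ∈ Finset.Icc 1 K, c i * lam (ω - θ i))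
    (hσ : 0 < σ)
    (hε : cumul lam ε ≥
      (∫ ω, lam ω) * (1 - (cumul lam σ / cumul lam 0 - 1) / (2 * (K : ℝ) * r)))
    (hζ : cumul lam (ζ / 2 - e) ≥
      (∫ ω, lam ω) * (1 - (cumul lam σ / cumul lam 0 - 1) / (2 * ((K : ℝ) - 1) * r + 1))) :
    cumul lam (θh K - θ K) ≥ cumul lam (-σ) := by
  have hmonoΛ : ∀ {x y : ℝ}, x ≤ y → cumul lam x ≤ cumul lam y :=
    fun h => cumul_mono hint hnn h
  have hnnΛ := cumul_nonneg (lam := lam) hnn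
  have hleT := cumul_le_total hint hnn
  have heq := cumul_add_neg hint heven
  set T := ∫ ω, lam ω with hT
  -- trivial case: Λ 0 = 0
  by_cases h0 : cumul lam 0 = 0
  · have hT0 : T = 0 := by have := heq 0; rw [neg_zero, h0] at this; linarith
    have h1 : cumul lam (-σ) ≤ 0 := by rw [← hT0]; exact hleT _
    have h2 := hnnΛ (θh K - θ K)
    linarith
  have hΛ0 : 0 < cumul lam 0 := lt_of_le_of_ne (hnnΛ 0) (Ne.symm h0)
  have hTpos : 0 < T := by have := heq 0; rw [neg_zero] at this; linarith
  -- easy case: θmax < θh K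
  rcases le_or_gt (θh K) θmax with hcase | hcase
  swap
  · exact hmonoΛ (by linarith)
  -- main case
  have hr1 : (1 : ℝ) ≤ r := by
    have h := hr 1 1 le_rfl (by omega) le_rfl (by omega)
    rwa [div_self (hc 1 le_rfl (by omega)).ne'] at h
  set δ := cumul lam σ / cumul lam 0 - 1 with hδdef
  have hδ : 0 ≤ δ := by
    have h1 : cumul lam 0 ≤ cumul lam σ := hmonoΛ hσ.le
    have := (one_le_div hΛ0).2 h1
    simp only [hδdef]; linarith
  have hΛσ : cumul lam σ = cumul lam 0 * (1 + δ) := by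
    rw [hδdef, add_sub_cancel, mul_div_cancel₀ _ h0]
  have hΛnegσ : cumul lam (-σ) = cumul lam 0 * (1 - δ) := by
    have h1 := heq σ
    have h2 := heq 0
    rw [neg_zero] at h2
    linarith [hΛσ]
  have hKm : K - 1 + 1 = K := by omega
  have hK1 : (1:ℕ) ≤ K - 1 := by omega
  -- θ is monotone on [1, K]
  have θmono : ∀ j i, 1 ≤ i → i ≤ j → j ≤ K → θ i ≤ θ j := by
    intro j
    induction j with
    | zero => intro i h1 h2 _; omega
    | succ n ih =>
      intro i h1 h2 hK'
      rcases eq_or_lt_of_le h2 with h | h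
      · rw [h]
      · have hin : i ≤ n := by omega
        have e1 : θ i ≤ θ n := ih i h1 hin (by omega)
        have e2 : θ n < θ (n + 1) := hmono n (by omega) (by omega)
        linarith
  set m := (θh (K - 1) + θh K) / 2 with hm
  have hhK : θh (K - 1) < θh K := by
    have := hhmono (K - 1) hK1 (by omega)
    rwa [hKm] at this
  have hmle : m ≤ θh K := by simp only [hm]; linarith
  have hsepK : ζ ≤ θ K - θ (K - 1) := by
    have := hsep (K - 1) hK1 (by omega)
    rwa [hKm] at this
  have heK : |θh K - θ K| ≤ e := he K (by omega) le_rfl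
  have heK1 : |θh (K - 1) - θ (K - 1)| ≤ e := he (K - 1) hK1 (by omega)
  rw [abs_le] at heK heK1
  -- rewrite balance condition
  rw [cumul_sum_interval hint, cumul_sum_interval hint] at hbal
  -- lower bound for RHS
  have hRlow : c K * (cumul lam (θmax - θ K) - cumul lam (θh K - θ K)) ≤
      ∑ i ∈ Finset.Icc 1 K, c i * (cumul lam (θmax - θ i) - cumul lam (θh K - θ i)) := by
    have hKmem : K ∈ Finset.Icc 1 K := Finset.mem_Icc.mpr ⟨by omega, le_rfl⟩
    refine Finset.single_le_sum
      (f := fun i => c i * (cumul lam (θmax - θ i) - cumul lam (θh K - θ i)))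
      (fun i hi => ?_) hKmem
    rw [Finset.mem_Icc] at hi
    have h1 : cumul lam (θh K - θ i) ≤ cumul lam (θmax - θ i) := hmonoΛ (by linarith)
    exact mul_nonneg (hc i hi.1 hi.2).le (by linarith)
  -- split the LHS sum
  have hsplit : Finset.Icc 1 K = insert K (Finset.Icc 1 (K - 1)) := by
    ext x
    simp only [Finset.mem_Icc, Finset.mem_insert]
    omega
  have hnotmem : K ∉ Finset.Icc 1 (K - 1) := by
    simp only [Finset.mem_Icc]; omega
  set B := T - cumul lam (ζ / 2 - e) with hB
  have hBnn : 0 ≤ B := by simp only [hB]; linarith [hleT (ζ / 2 - e)]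
  have hciB : ∀ i ∈ Finset.Icc 1 (K - 1),
      c i * (cumul lam (θh K - θ i) - cumul lam (m - θ i)) ≤ (r * c K) * B := by
    intro i hi
    rw [Finset.mem_Icc] at hi
    have hθi : θ i ≤ θ (K - 1) := θmono (K - 1) i hi.1 hi.2 (by omega)
    have hmθ : ζ / 2 - e ≤ m - θ i := by simp only [hm]; linarith
    have h1 : cumul lam (ζ / 2 - e) ≤ cumul lam (m - θ i) := hmonoΛ hmθ
    have h2 : cumul lam (θh K - θ i) ≤ T := hleT _
    have hci : c i ≤ r * c K := by
      have := hr i K hi.1 (by omega) (by omega) le_rfl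
      rwa [div_le_iff₀ (hc K (by omega) le_rfl)] at this
    have hcipos := hc i hi.1 (by omega)
    have hterm : cumul lam (θh K - θ i) - cumul lam (m - θ i) ≤ B := by
      simp only [hB]; linarith
    calc c i * (cumul lam (θh K - θ i) - cumul lam (m - θ i))
        ≤ c i * B := by
          rcases le_or_gt (cumul lam (θh K - θ i) - cumul lam (m - θ i)) 0 with h | h
          · nlinarith
          · exact mul_le_mul_of_nonneg_left hterm hcipos.le
      _ ≤ (r * c K) * B := mul_le_mul_of_nonneg_right hci hBnn
  -- upper bound for LHS
  have hcK := hc K (by omega) le_rfl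
  have hLup : (∑ i ∈ Finset.Icc 1 K, c i * (cumul lam (θh K - θ i) - cumul lam (m - θ i))) ≤
      ((K : ℝ) - 1) * ((r * c K) * B) + c K * cumul lam (θh K - θ K) := by
    rw [hsplit, Finset.sum_insert hnotmem]
    have h1 : (∑ i ∈ Finset.Icc 1 (K - 1), c i * (cumul lam (θh K - θ i) - cumul lam (m - θ i)))
        ≤ ∑ _i ∈ Finset.Icc 1 (K - 1), (r * c K) * B := Finset.sum_le_sum hciB
    rw [Finset.sum_const, Nat.card_Icc] at h1
    have hcard : ((K - 1 + 1 - 1 : ℕ) : ℝ) = (K : ℝ) - 1 := by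
      rw [show K - 1 + 1 - 1 = K - 1 from by omega, Nat.cast_sub (by omega)]
      norm_num
    rw [nsmul_eq_mul, hcard] at h1
    have h2 : c K * (cumul lam (θh K - θ K) - cumul lam (m - θ K)) ≤
        c K * cumul lam (θh K - θ K) := by
      linarith [mul_nonneg hcK.le (hnnΛ (m - θ K))]
    linarith
  -- key inequality
  have hεmax : cumul lam ε ≤ cumul lam (θmax - θ K) := hmonoΛ hoff
  have hkey : cumul lam ε - 2 * cumul lam (θh K - θ K) ≤ ((K : ℝ) - 1) * r * B := by
    rw [← hbal] at hRlow
    have hchain : c K * (cumul lam ε - cumul lam (θh K - θ K)) ≤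
        ((K : ℝ) - 1) * ((r * c K) * B) + c K * cumul lam (θh K - θ K) := by
      calc c K * (cumul lam ε - cumul lam (θh K - θ K))
          ≤ c K * (cumul lam (θmax - θ K) - cumul lam (θh K - θ K)) :=
            mul_le_mul_of_nonneg_left (by linarith) hcK.le
        _ ≤ _ := le_trans hRlow hLup
    have hchain2 : c K * (cumul lam ε - 2 * cumul lam (θh K - θ K)) ≤
        c K * (((K : ℝ) - 1) * r * B) := by linarith [hchain]
    exact le_of_mul_le_mul_left hchain2 hcK
  -- final arithmetic
  have hk2 : (2:ℝ) ≤ (K:ℝ) := by exact_mod_cast hK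
  have hd1 : (4:ℝ) ≤ 2 * (K:ℝ) * r := by nlinarith
  have hd2pos : (0:ℝ) < 2 * ((K:ℝ) - 1) * r + 1 := by nlinarith
  have h1 : δ / (2 * (K:ℝ) * r) ≤ δ / 4 :=
    div_le_div_of_nonneg_left hδ (by norm_num) hd1
  -- from hζ : B ≤ T * δ / d2
  have hBle : B ≤ T * δ / (2 * ((K:ℝ) - 1) * r + 1) := by
    have hexp : T * (1 - δ / (2 * ((K:ℝ) - 1) * r + 1)) =
        T - T * δ / (2 * ((K:ℝ) - 1) * r + 1) := by ring
    simp only [hB]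
    rw [hexp] at hζ
    linarith
  have h2 : ((K:ℝ) - 1) * r * (T * δ / (2 * ((K:ℝ) - 1) * r + 1)) ≤ T * δ / 2 := by
    rw [show ((K:ℝ) - 1) * r * (T * δ / (2 * ((K:ℝ) - 1) * r + 1)) =
      (((K:ℝ) - 1) * r * (T * δ)) / (2 * ((K:ℝ) - 1) * r + 1) from by ring]
    rw [div_le_div_iff₀ hd2pos two_pos]
    nlinarith [mul_nonneg hTpos.le hδ]
  have h3 : ((K:ℝ) - 1) * r * B ≤ T * δ / 2 := by
    have hK1r : (0:ℝ) ≤ ((K:ℝ) - 1) * r := by nlinarith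
    calc ((K:ℝ) - 1) * r * B ≤ ((K:ℝ) - 1) * r * (T * δ / (2 * ((K:ℝ) - 1) * r + 1)) :=
          mul_le_mul_of_nonneg_left hBle hK1r
      _ ≤ T * δ / 2 := h2
  have hεlow : T - T * δ / 4 ≤ cumul lam ε := by
    have h4 : T * (δ / (2 * (K:ℝ) * r)) ≤ T * (δ / 4) :=
      mul_le_mul_of_nonneg_left h1 hTpos.le
    have e1 : T * (1 - δ / (2 * (K:ℝ) * r)) = T - T * (δ / (2 * (K:ℝ) * r)) := by ring
    have e2 : T * (δ / 4) = T * δ / 4 := by ring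
    linarith [hε]
  have hT2 : T = 2 * cumul lam 0 := by
    have := heq 0; rw [neg_zero] at this; linarith
  have egoal : cumul lam 0 * (1 - δ) = (T - T * δ) / 2 := by rw [hT2]; ring
  clear_value T δ B m
  have hTδ : 0 ≤ T * δ := mul_nonneg hTpos.le hδ
  have s1 : cumul lam ε ≤ 2 * cumul lam (θh K - θ K) + T * δ / 2 := by linarith [hkey, h3]
  have s2 : T - T * δ / 4 ≤ 2 * cumul lam (θh K - θ K) + T * δ / 2 := by linarith [s1, hεlow]
  have hfin : T - T * δ ≤ 2 * cumul lam (θh K - θ K) := by linarith [s2, hTδ]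
  rw [ge_iff_le, hΛnegσ, egoal]
  linarith
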